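/- Let r ≥ 1 and m ≥ C(r+1,2) + 1, and let G be a connected finite simple graph with m edges and maximum degree at most r. If G has a cluster T whose common neighborhood S_T has size s ≤ (r + 2)/2, then k_3(G) < f_3(m, r); that is, there exists a graph G' with m edges and maximum degree at most r with k_3(G') > k_3(G). -/

import Mathlib

open scoped Classical
open Finset

variable {V : Type} [Fintype V] [DecidableEq V]

/-- A tight clique for the parameter `r`: a complete subgraph `T` all of whose edges `xy` are
tight, i.e. have weight `w(xy) = |N(x) ∩ N(y)| = r − 1`. -/
def IsTightClique (G : SimpleGraph V) (r : ℕ) (T : Finset V) : Prop :=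
  G.IsClique ↑T ∧ ∀ x ∈ T, ∀ y ∈ T, x ≠ y →
    (G.neighborFinset x ∩ G.neighborFinset y).card = r - 1

/-- A cluster: a maximal tight clique. -/
def IsCluster (G : SimpleGraph V) (r : ℕ) (T : Finset V) : Prop :=
  IsTightClique G r T ∧ ∀ T' : Finset V, IsTightClique G r T' → T ⊆ T' → T' = T

/-- `S_T = ⋂_{v ∈ T} N(v)`, the set of common neighbors of the vertices of `T`. -/
noncomputable def commonNbrs (G : SimpleGraph V) (T : Finset V) : Finset V :=
  Finset.univ.filter fun u => ∀ v ∈ T, G.Adj v u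

/-- The red graph `R_T`: the complement of the induced subgraph `G[S]` (for `S = S_T`), viewed
as the graph on `V` whose edges are the non-adjacent pairs of distinct vertices of `S`. -/
def redGraph (G : SimpleGraph V) (S : Finset V) : SimpleGraph V where
  Adj u v := u ∈ S ∧ v ∈ S ∧ u ≠ v ∧ ¬G.Adj u v
  symm := by
    constructor
    intro u v h
    exact ⟨h.2.1, h.1, h.2.2.1.symm, fun h' => h.2.2.2 h'.symm⟩
  loopless := by
    constructor
    intro u h
    exact h.2.2.1 rfl

/-- A blue edge: an edge of `G` with one endpoint in `S_T` and the other outside `T ∪ S_T`. -/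
def IsBlueEdge (G : SimpleGraph V) (T : Finset V) (u v : V) : Prop :=
  G.Adj u v ∧ ((u ∈ commonNbrs G T ∧ v ∉ T ∪ commonNbrs G T) ∨
    (v ∈ commonNbrs G T ∧ u ∉ T ∪ commonNbrs G T))

/-- The graph `B_T` of blue edges. -/
def blueGraph (G : SimpleGraph V) (T : Finset V) : SimpleGraph V where
  Adj u v := IsBlueEdge G T u v
  symm := by
    constructor
    intro u v h
    exact ⟨h.1.symm, h.2.symm⟩
  loopless := ⟨fun u h => G.irrefl h.1⟩

/-- The folding `G_T` of `G` at the cluster `T`: add all missing pairs inside `S_T` (so that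
`T ∪ S_T` induces a complete graph) and delete all blue edges. -/
def folding (G : SimpleGraph V) (T : Finset V) : SimpleGraph V where
  Adj u v := u ≠ v ∧ (G.Adj u v ∨ (u ∈ commonNbrs G T ∧ v ∈ commonNbrs G T)) ∧
    ¬IsBlueEdge G T u v
  symm := by
    constructor
    intro u v h
    obtain ⟨h1, h2, h3⟩ := h
    refine ⟨h1.symm, ?_, ?_⟩
    · rcases h2 with h | h
      · exact Or.inl h.symm
      · exact Or.inr ⟨h.2, h.1⟩
    · intro hb
      exact h3 ⟨hb.1.symm, hb.2.symm⟩
  loopless := ⟨fun u h => h.1 rfl⟩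


/-!
Fold `G` at `T`: delete the `b` blue edges (from `S = S_T` to the outside of `T ∪ S`) and add
`k = min ρ b` of the `ρ` red pairs (non-adjacent pairs inside `S`). Every `v ∈ T` has neighbourhood
exactly `(T \ {v}) ∪ S`. A vertex `x ∈ S` is adjacent to all of `T`, so its degree bound
`r = |T| + |S| - 1` caps its blue degree by its red degree; hence `b ≤ 2ρ`, so `b ≤ 2k`, and after
folding every `x ∈ S` has all its neighbours in `(T ∪ S) \ {x}`, a set of size `r`.

A blue edge `xy` lies in at most `|S| - 2` triangles (`N(x) ⊇ T ∪ {y}` and `T` misses `N(y)`), and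
every destroyed triangle contains two blue edges, so at most `b(|S| - 2)/2 ≤ k(|S| - 2)` triangles
are lost, whereas each added red pair spans a new triangle with each vertex of `T`, and
`k|T| > k(|S| - 2)` because `2s ≤ r + 2` means `|S| ≤ |T| + 1`. Connectivity and
`m > C(r+1, 2)` force a blue edge, so `k ≥ 1`; the `b - k` missing edges are returned as a disjoint
matching.
-/

lemma Finset.exists_eq_triple_of_card_eq_three {α : Type*} [DecidableEq α] {t : Finset α}
    (ht : #t = 3) {x y : α} (hx : x ∈ t) (hy : y ∈ t) (hxy : x ≠ y) :
    ∃ c, c ≠ x ∧ c ≠ y ∧ t = {x, y, c} := by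
  have hy' : y ∈ t.erase x := mem_erase.2 ⟨hxy.symm, hy⟩
  obtain ⟨c, hc⟩ := card_eq_one.1 (by rw [card_erase_of_mem hy', card_erase_of_mem hx, ht] :
    #((t.erase x).erase y) = 1)
  have hc' : c ∈ (t.erase x).erase y := hc ▸ mem_singleton_self c
  refine ⟨c, ne_of_mem_erase (mem_of_mem_erase hc'), ne_of_mem_erase hc', ?_⟩
  rw [← insert_erase hx, ← insert_erase hy', hc]

namespace SimpleGraph

variable {W X : Type*}

lemma degree_sum_inl (G : SimpleGraph W) (H : SimpleGraph X) (w : W)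
    [Fintype ((G ⊕g H).neighborSet (.inl w))] [Fintype (G.neighborSet w)] :
    (G ⊕g H).degree (.inl w) = G.degree w := by
  rw [← card_neighborSet_eq_degree, ← card_neighborSet_eq_degree]
  simp only [neighborSet_sum_inl]
  exact Set.card_image_of_injective _ Sum.inl_injective

lemma degree_sum_inr (G : SimpleGraph W) (H : SimpleGraph X) (x : X)
    [Fintype ((G ⊕g H).neighborSet (.inr x))] [Fintype (H.neighborSet x)] :
    (G ⊕g H).degree (.inr x) = H.degree x := by
  rw [← card_neighborSet_eq_degree, ← card_neighborSet_eq_degree]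
  simp only [neighborSet_sum_inr]
  exact Set.card_image_of_injective _ Sum.inr_injective

lemma card_edgeFinset_sum [Fintype W] [Fintype X] (G : SimpleGraph W) (H : SimpleGraph X) :
    #(G ⊕g H).edgeFinset = #G.edgeFinset + #H.edgeFinset := by
  have := (G ⊕g H).sum_degrees_eq_twice_card_edges
  rw [Fintype.sum_sum_type] at this
  simp only [degree_sum_inl, degree_sum_inr, sum_degrees_eq_twice_card_edges] at this
  omega

lemma card_cliqueFinset_le_sum [Fintype W] [Fintype X] (G : SimpleGraph W) (H : SimpleGraph X)
    (n : ℕ) : #(G.cliqueFinset n) ≤ #((G ⊕g H).cliqueFinset n) := by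
  refine card_le_card_of_injOn (Finset.map .inl) (fun s hs => ?_)
    (fun s _ t _ h => Finset.map_injective _ h)
  have hle : G.map Function.Embedding.inl ≤ G ⊕g H := by
    rintro _ _ ⟨-, a, b, h, rfl, rfl⟩
    exact h
  rw [mem_coe, mem_cliqueFinset_iff] at hs ⊢
  exact hs.map.mono hle

lemma card_edgeFinset_bot_boxProd_top (p : ℕ) :
    #((⊥ : SimpleGraph (Fin p)) □ (⊤ : SimpleGraph Bool)).edgeFinset = p := by
  have := ((⊥ : SimpleGraph (Fin p)) □ (⊤ : SimpleGraph Bool)).sum_degrees_eq_twice_card_edges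
  simp [degree_boxProd] at this
  omega

theorem exists_fin_card_edgeFinset_eq_of_le [Fintype W] (H : SimpleGraph W) {r m : ℕ}
    (hr : 1 ≤ r) (hΔ : H.maxDegree ≤ r) (hm : #H.edgeFinset ≤ m) :
    ∃ (n : ℕ) (G' : SimpleGraph (Fin n)), #G'.edgeFinset = m ∧ G'.maxDegree ≤ r ∧
      #(H.cliqueFinset 3) ≤ #(G'.cliqueFinset 3) := by
  -- a perfect matching with `m - #H.edgeFinset` edges
  set M := (⊥ : SimpleGraph (Fin (m - #H.edgeFinset))) □ (⊤ : SimpleGraph Bool)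
  set K := H ⊕g M
  let e := Fintype.equivFin (W ⊕ Fin (m - #H.edgeFinset) × Bool)
  refine ⟨_, K.map e, ?_, ?_, ?_⟩
  · have hK := (Iso.map e K).card_edgeFinset_eq
    rw [card_edgeFinset_sum, card_edgeFinset_bot_boxProd_top, Nat.add_sub_cancel' hm] at hK
    convert hK.symm
  · have hK : K.maxDegree ≤ r := by
      refine maxDegree_le_of_forall_degree_le _ _ ?_
      rintro (w | x)
      · rw [degree_sum_inl]
        exact (H.degree_le_maxDegree w).trans hΔ
      · rw [degree_sum_inr, degree_boxProd]
        simpa using hr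
    convert hK using 1
    convert (Iso.map e K).maxDegree_eq.symm
  · convert card_cliqueFinset_le_sum H M 3 using 1
    rw [← card_map ⟨Finset.map e.toEmbedding, Finset.map_injective _⟩]
    convert congrArg card (cliqueFinset_map_of_equiv K e 3)

lemma exists_le_card_edgeFinset_eq [Fintype W] (G : SimpleGraph W) {k : ℕ}
    (hk : k ≤ #G.edgeFinset) : ∃ F ≤ G, #F.edgeFinset = k := by
  obtain ⟨D, hD, hDcard⟩ := exists_subset_card_eq (Nat.sub_le #G.edgeFinset k)
  refine ⟨G.deleteEdges D, deleteEdges_le _, ?_⟩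
  rw [edgeFinset_deleteEdges, card_sdiff_of_subset hD]
  omega

lemma card_edgeFinset_sdiff_sup_le [Fintype W] [DecidableEq W] {G B : SimpleGraph W}
    (hB : B ≤ G) (F : SimpleGraph W) :
    #(G \ B ⊔ F).edgeFinset + #B.edgeFinset ≤ #G.edgeFinset + #F.edgeFinset := by
  rw [edgeFinset_sup, edgeFinset_sdiff]
  have := card_union_le (G.edgeFinset \ B.edgeFinset) F.edgeFinset
  have := card_sdiff_of_subset (edgeFinset_mono hB)
  have := card_le_card (edgeFinset_mono hB)
  omega

lemma card_filter_cliqueFinset_three_le [Fintype W] [DecidableEq W] (G : SimpleGraph W)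
    {x y : W} (hxy : x ≠ y) :
    #((G.cliqueFinset 3).filter fun t => x ∈ t ∧ y ∈ t) ≤
      #(G.neighborFinset x ∩ G.neighborFinset y) := by
  refine (card_le_card fun t ht => ?_).trans (card_image_le (f := fun c => {x, y, c}))
  obtain ⟨ht, hxt, hyt⟩ := mem_filter.1 ht
  rw [mem_cliqueFinset_iff] at ht
  obtain ⟨c, hcx, hcy, rfl⟩ := Finset.exists_eq_triple_of_card_eq_three ht.card_eq hxt hyt hxy
  refine mem_image.2 ⟨c, ?_, rfl⟩
  simp only [mem_inter, mem_neighborFinset]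
  exact ⟨ht.isClique (by simp) (by simp) hcx.symm, ht.isClique (by simp) (by simp) hcy.symm⟩

end SimpleGraph

open SimpleGraph

lemma mem_commonNbrs {G : SimpleGraph V} {T : Finset V} {x : V} :
    x ∈ commonNbrs G T ↔ ∀ v ∈ T, G.Adj v x := by
  simp [commonNbrs]

lemma disjoint_commonNbrs (G : SimpleGraph V) (T : Finset V) : Disjoint T (commonNbrs G T) :=
  disjoint_left.2 fun v hv hvS => G.irrefl (mem_commonNbrs.1 hvS v hv)

lemma isBlueEdge_iff_of_mem {G : SimpleGraph V} {T : Finset V} {x y : V}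
    (hx : x ∈ commonNbrs G T) :
    IsBlueEdge G T x y ↔ G.Adj x y ∧ y ∉ T ∪ commonNbrs G T := by
  refine ⟨fun ⟨hxy, h⟩ => ⟨hxy, ?_⟩, fun ⟨hxy, hy⟩ => ⟨hxy, .inl ⟨hx, hy⟩⟩⟩
  rcases h with ⟨-, hy⟩ | ⟨-, hx'⟩
  · exact hy
  · exact absurd (mem_union_right T hx) hx'

lemma not_isBlueEdge_of_mem {G : SimpleGraph V} {T : Finset V} {u v : V}
    (hu : u ∈ T ∪ commonNbrs G T) (hv : v ∈ T ∪ commonNbrs G T) : ¬IsBlueEdge G T u v := by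
  rintro ⟨-, ⟨-, hv'⟩ | ⟨-, hu'⟩⟩
  · exact hv' hv
  · exact hu' hu

lemma blueGraph_le (G : SimpleGraph V) (T : Finset V) : blueGraph G T ≤ G :=
  fun _ _ h => h.1

section Cluster

variable {G : SimpleGraph V} {r : ℕ} {T : Finset V}

lemma neighborFinset_eq_of_mem (hT : G.IsClique T) (hΔ : G.maxDegree ≤ r)
    (hTS : #T + #(commonNbrs G T) = r + 1) {v : V} (hv : v ∈ T) :
    G.neighborFinset v = T.erase v ∪ commonNbrs G T := by
  symm
  refine eq_of_subset_of_card_le (fun y hy => ?_) ?_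
  · rw [mem_neighborFinset]
    rcases mem_union.1 hy with hy | hy
    · exact hT hv (mem_of_mem_erase hy) (ne_of_mem_erase hy).symm
    · exact mem_commonNbrs.1 hy v hv
  · rw [card_union_of_disjoint (disjoint_of_subset_left (erase_subset v T)
      (disjoint_commonNbrs G T)), card_erase_of_mem hv, card_neighborFinset_eq_degree]
    have := (G.degree_le_maxDegree v).trans hΔ
    have := card_pos.2 ⟨v, hv⟩
    omega

lemma mem_union_commonNbrs_of_adj (hT : G.IsClique T) (hΔ : G.maxDegree ≤ r)
    (hTS : #T + #(commonNbrs G T) = r + 1) {v y : V} (hv : v ∈ T) (hvy : G.Adj v y) :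
    y ∈ T ∪ commonNbrs G T := by
  have hy := (mem_neighborFinset G v y).2 hvy
  rw [neighborFinset_eq_of_mem hT hΔ hTS hv] at hy
  exact union_subset_union (erase_subset v T) subset_rfl hy

lemma exists_isBlueEdge (hT : G.IsClique T) (hΔ : G.maxDegree ≤ r)
    (hTS : #T + #(commonNbrs G T) = r + 1) (hconn : G.Connected)
    (hm : (r + 1).choose 2 < #G.edgeFinset) : ∃ x y, IsBlueEdge G T x y := by
  by_contra! hS
  have hclosed : ∀ ⦃u w⦄, u ∈ T ∪ commonNbrs G T → G.Adj u w → w ∈ T ∪ commonNbrs G T := by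
    intro u w hu huw
    rcases mem_union.1 hu with hu | hu
    · exact mem_union_commonNbrs_of_adj hT hΔ hTS hu huw
    · by_contra hw
      exact hS u w ((isBlueEdge_iff_of_mem hu).2 ⟨huw, hw⟩)
  obtain ⟨u, hu⟩ : (T ∪ commonNbrs G T).Nonempty := by
    rw [← card_pos, card_union_of_disjoint (disjoint_commonNbrs G T)]
    omega
  have huniv : ∀ w, w ∈ T ∪ commonNbrs G T := by
    intro w
    by_contra hw
    obtain ⟨d, -, hd, hd'⟩ :=
      (hconn.preconnected u w).some.exists_boundary_dart (T ∪ commonNbrs G T : Finset V) hu hw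
    exact hd' (hclosed hd d.adj)
  have hcard : Fintype.card V ≤ r + 1 := by
    rw [← card_univ, ← hTS, ← card_union_of_disjoint (disjoint_commonNbrs G T)]
    exact card_le_card fun w _ => huniv w
  have := G.card_edgeFinset_le_card_choose_two.trans (Nat.choose_le_choose 2 hcard)
  omega

lemma card_neighborFinset_inter_add_two_le (hT : G.IsClique T) (hΔ : G.maxDegree ≤ r)
    (hTS : #T + #(commonNbrs G T) = r + 1) {x y : V} (h : IsBlueEdge G T x y) :
    #(G.neighborFinset x ∩ G.neighborFinset y) + 2 ≤ #(commonNbrs G T) := by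
  wlog hx : x ∈ commonNbrs G T generalizing x y
  · rw [inter_comm]
    exact this ((blueGraph G T).adj_symm h) (h.2.resolve_left fun h' => hx h'.1).1
  obtain ⟨hxy, hy⟩ := (isBlueEdge_iff_of_mem hx).1 h
  have hdisj : Disjoint T (G.neighborFinset x ∩ G.neighborFinset y) := by
    refine disjoint_left.2 fun v hv hv' => hy (mem_union_commonNbrs_of_adj hT hΔ hTS hv ?_)
    exact ((mem_neighborFinset G y v).1 (mem_inter.1 hv').2).symm
  have hyT : y ∉ T ∪ (G.neighborFinset x ∩ G.neighborFinset y) := by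
    simp only [mem_union, mem_inter, mem_neighborFinset, SimpleGraph.irrefl, and_false, or_false]
    exact fun h => hy (mem_union_left _ h)
  have hsub : insert y (T ∪ (G.neighborFinset x ∩ G.neighborFinset y)) ⊆ G.neighborFinset x := by
    refine insert_subset ((mem_neighborFinset G x y).2 hxy)
      (union_subset (fun v hv => ?_) inter_subset_left)
    exact (mem_neighborFinset G x v).2 (mem_commonNbrs.1 hx v hv).symm
  have := card_le_card hsub
  rw [card_insert_of_notMem hyT, card_union_of_disjoint hdisj,
    card_neighborFinset_eq_degree] at this
  have := (G.degree_le_maxDegree x).trans hΔ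
  omega

lemma degree_blueGraph_le_degree_redGraph (hΔ : G.maxDegree ≤ r)
    (hTS : #T + #(commonNbrs G T) = r + 1) {x : V} (hx : x ∈ commonNbrs G T) :
    (blueGraph G T).degree x ≤ (redGraph G (commonNbrs G T)).degree x := by
  set S := commonNbrs G T
  have hsub : T ∪ S.erase x ∪ (blueGraph G T).neighborFinset x ⊆
      G.neighborFinset x ∪ (redGraph G S).neighborFinset x := by
    intro w hw
    simp only [mem_union, mem_erase, mem_neighborFinset] at hw ⊢
    rcases hw with (hw | ⟨hwx, hw⟩) | hw
    · exact .inl (mem_commonNbrs.1 hx w hw).symm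
    · by_cases hxw : G.Adj x w
      · exact .inl hxw
      · exact .inr ⟨hx, hw, hwx.symm, hxw⟩
    · exact .inl hw.1
  have hdisj : Disjoint (T ∪ S.erase x) ((blueGraph G T).neighborFinset x) := by
    refine disjoint_right.2 fun w hw hw' => ?_
    rw [mem_neighborFinset] at hw
    exact ((isBlueEdge_iff_of_mem hx).1 hw).2 (union_subset_union subset_rfl (erase_subset x S) hw')
  have := (card_le_card hsub).trans (card_union_le _ _)
  rw [card_union_of_disjoint hdisj, card_union_of_disjoint (disjoint_of_subset_right
    (erase_subset x S) (disjoint_commonNbrs G T)), card_erase_of_mem hx] at this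
  simp only [card_neighborFinset_eq_degree] at this
  have := (G.degree_le_maxDegree x).trans hΔ
  omega

lemma card_edgeFinset_blueGraph_le_two_mul (hΔ : G.maxDegree ≤ r)
    (hTS : #T + #(commonNbrs G T) = r + 1) :
    #(blueGraph G T).edgeFinset ≤ 2 * #(redGraph G (commonNbrs G T)).edgeFinset := by
  set S := commonNbrs G T
  have hcover :
      (blueGraph G T).edgeFinset ⊆ S.biUnion fun x => (blueGraph G T).incidenceFinset x := by
    intro e he
    induction e using Sym2.ind with | h u v => ?_
    rw [mem_edgeFinset] at he
    rw [mem_biUnion]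
    rcases he.2 with ⟨hu, -⟩ | ⟨hv, -⟩
    · exact ⟨u, hu, (mem_incidenceFinset _ _ _).2 ⟨he, Sym2.mem_mk_left u v⟩⟩
    · exact ⟨v, hv, (mem_incidenceFinset _ _ _).2 ⟨he, Sym2.mem_mk_right u v⟩⟩
  have hred : ∀ x ∉ S, (redGraph G S).degree x = 0 := fun x hx => by
    rw [← card_neighborFinset_eq_degree, card_eq_zero, eq_empty_iff_forall_notMem]
    exact fun y hy => hx ((mem_neighborFinset _ x y).1 hy).1
  calc #(blueGraph G T).edgeFinset
      ≤ ∑ x ∈ S, (blueGraph G T).degree x := by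
        simpa only [card_incidenceFinset_eq_degree] using
          (card_le_card hcover).trans card_biUnion_le
    _ ≤ ∑ x ∈ S, (redGraph G S).degree x :=
        sum_le_sum fun x hx => degree_blueGraph_le_degree_redGraph hΔ hTS hx
    _ = ∑ x, (redGraph G S).degree x :=
        sum_subset (subset_univ S) fun x _ hx => hred x hx
    _ = 2 * #(redGraph G S).edgeFinset := sum_degrees_eq_twice_card_edges _

lemma one_lt_card_blue_edges_of_lost_triangle (hT : G.IsClique T) (hΔ : G.maxDegree ≤ r)
    (hTS : #T + #(commonNbrs G T) = r + 1) {t : Finset V}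
    (ht : t ∈ G.cliqueFinset 3) (ht' : t ∉ (G \ blueGraph G T).cliqueFinset 3) :
    1 < #((blueGraph G T).edgeFinset.filter (· ∈ t.sym2)) := by
  set S := commonNbrs G T
  rw [mem_cliqueFinset_iff] at ht ht'
  obtain ⟨a, ha, b, hb, hab, hnab⟩ :
      ∃ a ∈ t, ∃ b ∈ t, a ≠ b ∧ ¬(G \ blueGraph G T).Adj a b := by
    by_contra! h
    exact ht' ⟨fun a ha b hb hab => h a ha b hb hab, ht.card_eq⟩
  have hblue : (blueGraph G T).Adj a b := by simpa [sdiff_adj, ht.isClique ha hb hab] using hnab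
  obtain ⟨x, y, hxt, hyt, hx, hy, hxy⟩ :
      ∃ x y, x ∈ t ∧ y ∈ t ∧ x ∈ S ∧ y ∉ T ∪ S ∧ G.Adj x y := by
    rcases hblue with ⟨hab, ⟨haS, hb'⟩ | ⟨hbS, ha'⟩⟩
    · exact ⟨a, b, ha, hb, haS, hb', hab⟩
    · exact ⟨b, a, hb, ha, hbS, ha', hab.symm⟩
  obtain ⟨c, hcx, hcy, htc⟩ := Finset.exists_eq_triple_of_card_eq_three ht.card_eq hxt hyt hxy.ne
  have hct : c ∈ t := by simp [htc]
  have hxc : G.Adj x c := ht.isClique hxt hct hcx.symm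
  have hyc : G.Adj y c := ht.isClique hyt hct hcy.symm
  have hcT : c ∉ T := fun hc => hy (mem_union_commonNbrs_of_adj hT hΔ hTS hc hyc.symm)
  have hmem : ∀ {u v}, IsBlueEdge G T u v → u ∈ t → v ∈ t →
      s(u, v) ∈ (blueGraph G T).edgeFinset.filter (· ∈ t.sym2) := fun huv hu hv =>
    mem_filter.2 ⟨mem_edgeFinset.2 huv, mk_mem_sym2_iff.2 ⟨hu, hv⟩⟩
  have hxy' : IsBlueEdge G T x y := (isBlueEdge_iff_of_mem hx).2 ⟨hxy, hy⟩
  rw [one_lt_card]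
  -- the third vertex `c` is outside `T`, so `cy` is blue if `c ∈ S` and `xc` is blue otherwise
  by_cases hcS : c ∈ S
  · refine ⟨_, hmem hxy' hxt hyt, _, hmem ((isBlueEdge_iff_of_mem hcS).2 ⟨hyc.symm, hy⟩) hct hyt,
      ?_⟩
    simp [hcx.symm, hcy.symm]
  · have hc : c ∉ T ∪ S := by simp [hcT, hcS]
    refine ⟨_, hmem hxy' hxt hyt, _, hmem ((isBlueEdge_iff_of_mem hx).2 ⟨hxc, hc⟩) hxt hct, ?_⟩
    simp [hcy.symm, hcx.symm]

lemma card_lost_triangles_mul_two_le (hT : G.IsClique T) (hΔ : G.maxDegree ≤ r)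
    (hTS : #T + #(commonNbrs G T) = r + 1) :
    #(G.cliqueFinset 3 \ (G \ blueGraph G T).cliqueFinset 3) * 2 ≤
      #(blueGraph G T).edgeFinset * (#(commonNbrs G T) - 2) := by
  refine card_mul_le_card_mul (fun t e => e ∈ t.sym2) (fun t ht => ?_) (fun e he => ?_)
  · rw [mem_sdiff] at ht
    exact one_lt_card_blue_edges_of_lost_triangle hT hΔ hTS ht.1 ht.2
  · induction e using Sym2.ind with | h x y => ?_
    have hxy : IsBlueEdge G T x y := mem_edgeFinset.1 he
    have hsub : (G.cliqueFinset 3 \ (G \ blueGraph G T).cliqueFinset 3).bipartiteBelow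
        (fun t e => e ∈ t.sym2) s(x, y) ⊆ (G.cliqueFinset 3).filter fun t => x ∈ t ∧ y ∈ t :=
      fun t ht => by
        simp only [bipartiteBelow, mem_filter, mem_sdiff, mk_mem_sym2_iff] at ht ⊢
        exact ⟨ht.1.1, ht.2⟩
    have := (card_le_card hsub).trans (card_filter_cliqueFinset_three_le G hxy.1.ne)
    have := card_neighborFinset_inter_add_two_le hT hΔ hTS hxy
    omega

lemma mem_commonNbrs_of_mem_edgeSet {F : SimpleGraph V} (hF : F ≤ redGraph G (commonNbrs G T))
    {e : Sym2 V} (he : e ∈ F.edgeSet) {w : V} (hw : w ∈ e) : w ∈ commonNbrs G T := by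
  induction e using Sym2.ind with | h a b => ?_
  obtain ⟨ha, hb, -⟩ := hF he
  rcases Sym2.mem_iff.1 hw with rfl | rfl
  · exact ha
  · exact hb

lemma maxDegree_sdiff_blueGraph_sup_le (hΔ : G.maxDegree ≤ r)
    (hTS : #T + #(commonNbrs G T) = r + 1) {F : SimpleGraph V}
    (hF : F ≤ redGraph G (commonNbrs G T)) :
    (G \ blueGraph G T ⊔ F).maxDegree ≤ r := by
  set S := commonNbrs G T
  apply maxDegree_le_of_forall_degree_le
  intro u
  rw [← card_neighborFinset_eq_degree]
  by_cases hu : u ∈ S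
  · have hsub : (G \ blueGraph G T ⊔ F).neighborFinset u ⊆ T ∪ S.erase u := by
      intro w hw
      rw [mem_neighborFinset, sup_adj, sdiff_adj] at hw
      rw [mem_union, mem_erase]
      rcases hw with ⟨huw, hnb⟩ | huw
      · have hw : w ∈ T ∪ S := by
          by_contra hw
          exact hnb ((isBlueEdge_iff_of_mem hu).2 ⟨huw, hw⟩)
        rcases mem_union.1 hw with hw | hw
        · exact .inl hw
        · exact .inr ⟨huw.ne.symm, hw⟩
      · obtain ⟨-, hw, huw, -⟩ := hF huw
        exact .inr ⟨huw.symm, hw⟩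
    have := card_le_card hsub
    rw [card_union_of_disjoint (disjoint_of_subset_right (erase_subset u S)
      (disjoint_commonNbrs G T)), card_erase_of_mem hu] at this
    have := card_pos.2 ⟨u, hu⟩
    omega
  · have hsub : (G \ blueGraph G T ⊔ F).neighborFinset u ⊆ G.neighborFinset u := by
      intro w hw
      rw [mem_neighborFinset, sup_adj, sdiff_adj] at hw
      rcases hw with ⟨huw, -⟩ | huw
      · exact (mem_neighborFinset G u w).2 huw
      · exact absurd (hF huw).1 hu
    calc #((G \ blueGraph G T ⊔ F).neighborFinset u) ≤ #(G.neighborFinset u) := card_le_card hsub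
      _ = G.degree u := card_neighborFinset_eq_degree G u
      _ ≤ r := (G.degree_le_maxDegree u).trans hΔ

lemma insert_toFinset_mem_cliqueFinset {F : SimpleGraph V}
    (hF : F ≤ redGraph G (commonNbrs G T)) {v : V} {e : Sym2 V} (hv : v ∈ T)
    (he : e ∈ F.edgeSet) :
    insert v e.toFinset ∈ (G \ blueGraph G T ⊔ F).cliqueFinset 3 ∧
      insert v e.toFinset ∉ G.cliqueFinset 3 := by
  induction e using Sym2.ind with | h a b => ?_
  obtain ⟨ha, hb, -, hnab⟩ := hF he
  have hva : (G \ blueGraph G T).Adj v a := ⟨mem_commonNbrs.1 ha v hv,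
    not_isBlueEdge_of_mem (mem_union_left _ hv) (mem_union_right T ha)⟩
  have hvb : (G \ blueGraph G T).Adj v b := ⟨mem_commonNbrs.1 hb v hv,
    not_isBlueEdge_of_mem (mem_union_left _ hv) (mem_union_right T hb)⟩
  simp only [Sym2.toFinset_mk_eq, mem_cliqueFinset_iff, is3Clique_triple_iff]
  exact ⟨⟨.inl hva, .inl hvb, .inr he⟩, fun h => hnab h.2.2⟩

lemma injOn_insert_toFinset {F : SimpleGraph V} (hF : F ≤ redGraph G (commonNbrs G T)) :
    Set.InjOn (fun p : V × Sym2 V => insert p.1 p.2.toFinset) ↑(T ×ˢ F.edgeFinset) := by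
  have hsplit : ∀ p ∈ T ×ˢ F.edgeFinset, (insert p.1 p.2.toFinset).filter (· ∈ T) = {p.1} ∧
      (insert p.1 p.2.toFinset).filter (· ∉ T) = p.2.toFinset := by
    rintro ⟨v, e⟩ hp
    rw [mem_product, mem_edgeFinset] at hp
    have heT : ∀ w ∈ e.toFinset, w ∉ T := fun w hw hwT =>
      disjoint_left.1 (disjoint_commonNbrs G T) hwT
        (mem_commonNbrs_of_mem_edgeSet hF hp.2 (Sym2.mem_toFinset.1 hw))
    simp only [filter_insert, hp.1, not_true_eq_false, if_true, if_false,
      filter_false_of_mem heT, filter_true_of_mem heT]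
    exact ⟨rfl, trivial⟩
  intro p hp q hq hpq
  obtain ⟨hp₁, hp₂⟩ := hsplit p hp
  obtain ⟨hq₁, hq₂⟩ := hsplit q hq
  have h₁ := congrArg (filter (· ∈ T)) hpq
  have h₂ := congrArg (filter (· ∉ T)) hpq
  simp only [hp₁, hq₁, singleton_inj] at h₁
  simp only [hp₂, hq₂] at h₂
  exact Prod.ext h₁ (Sym2.ext fun w => by rw [← Sym2.mem_toFinset, h₂, Sym2.mem_toFinset])

lemma card_cliqueFinset_sdiff_blueGraph_add_le {F : SimpleGraph V}
    (hF : F ≤ redGraph G (commonNbrs G T)) :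
    #((G \ blueGraph G T).cliqueFinset 3) + #T * #F.edgeFinset ≤
      #((G \ blueGraph G T ⊔ F).cliqueFinset 3) := by
  set new := (T ×ˢ F.edgeFinset).image fun p => insert p.1 p.2.toFinset
  have hnew : ∀ t ∈ new, t ∈ (G \ blueGraph G T ⊔ F).cliqueFinset 3 ∧ t ∉ G.cliqueFinset 3 := by
    simp only [new, mem_image, mem_product, Prod.exists]
    rintro _ ⟨v, e, ⟨hv, he⟩, rfl⟩
    exact insert_toFinset_mem_cliqueFinset hF hv (mem_edgeFinset.1 he)
  have hdisj : Disjoint ((G \ blueGraph G T).cliqueFinset 3) new :=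
    disjoint_left.2 fun t ht ht' => (hnew t ht').2 (cliqueFinset_mono _ sdiff_le ht)
  calc #((G \ blueGraph G T).cliqueFinset 3) + #T * #F.edgeFinset
      = #((G \ blueGraph G T).cliqueFinset 3 ∪ new) := by
        rw [card_union_of_disjoint hdisj, card_image_of_injOn (injOn_insert_toFinset hF),
          card_product]
    _ ≤ #((G \ blueGraph G T ⊔ F).cliqueFinset 3) :=
        card_le_card (union_subset (cliqueFinset_mono _ le_sup_left) fun t ht => (hnew t ht).1)

lemma card_cliqueFinset_lt_sdiff_blueGraph_sup (hT : G.IsClique T) (hΔ : G.maxDegree ≤ r)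
    (hTS : #T + #(commonNbrs G T) = r + 1) (hs : #(commonNbrs G T) ≤ #T + 1)
    (hT₀ : T.Nonempty) {F : SimpleGraph V} (hF : F ≤ redGraph G (commonNbrs G T))
    (hF₀ : 0 < #F.edgeFinset) (hbF : #(blueGraph G T).edgeFinset ≤ 2 * #F.edgeFinset) :
    #(G.cliqueFinset 3) < #((G \ blueGraph G T ⊔ F).cliqueFinset 3) := by
  set lost := G.cliqueFinset 3 \ (G \ blueGraph G T).cliqueFinset 3
  have hsplit : #lost + #((G \ blueGraph G T).cliqueFinset 3) = #(G.cliqueFinset 3) :=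
    card_sdiff_add_card_eq_card (cliqueFinset_mono _ sdiff_le)
  have hST : #(commonNbrs G T) - 2 < #T := by
    have := card_pos.2 hT₀
    omega
  have hlost : #lost * 2 < #T * #F.edgeFinset * 2 := calc
    #lost * 2 ≤ #(blueGraph G T).edgeFinset * (#(commonNbrs G T) - 2) :=
      card_lost_triangles_mul_two_le hT hΔ hTS
    _ ≤ 2 * #F.edgeFinset * (#(commonNbrs G T) - 2) := Nat.mul_le_mul_right _ hbF
    _ < 2 * #F.edgeFinset * #T := Nat.mul_lt_mul_of_pos_left hST (by omega)
    _ = #T * #F.edgeFinset * 2 := by ring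
  have := card_cliqueFinset_sdiff_blueGraph_add_le hF
  omega

end Cluster

theorem small_cluster_not_extremal_general {V : Type} [Fintype V] [DecidableEq V]
    (G : SimpleGraph V) (r m : ℕ) (hm : (r + 1).choose 2 + 1 ≤ m)
    (hconn : G.Connected)
    (hGm : G.edgeFinset.card = m) (hΔ : G.maxDegree ≤ r)
    (T : Finset V) (hT : IsCluster G r T)
    (hTS : T.card + (commonNbrs G T).card = r + 1)
    (hs : 2 * (commonNbrs G T).card ≤ r + 2) :
    ∃ (n : ℕ) (G' : SimpleGraph (Fin n)),
      G'.edgeFinset.card = m ∧ G'.maxDegree ≤ r ∧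
        (G.cliqueFinset 3).card < (G'.cliqueFinset 3).card := by
  obtain ⟨⟨hTc, -⟩, -⟩ := hT
  obtain ⟨x, y, hxy⟩ := exists_isBlueEdge hTc hΔ hTS hconn (by omega)
  have hS₂ := card_neighborFinset_inter_add_two_le hTc hΔ hTS hxy
  have hb₀ : 0 < #(blueGraph G T).edgeFinset := card_pos.2 ⟨s(x, y), mem_edgeFinset.2 hxy⟩
  have hbρ := card_edgeFinset_blueGraph_le_two_mul hΔ hTS
  obtain ⟨F, hF, hFcard⟩ := exists_le_card_edgeFinset_eq (redGraph G (commonNbrs G T))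
    (min_le_left _ #(blueGraph G T).edgeFinset)
  have hHm : #(G \ blueGraph G T ⊔ F).edgeFinset ≤ m := by
    have := card_edgeFinset_sdiff_sup_le (blueGraph_le G T) F
    omega
  have hlt := card_cliqueFinset_lt_sdiff_blueGraph_sup hTc hΔ hTS (by omega)
    (card_pos.1 (by omega)) hF (by omega) (by omega)
  -- the `convert`s only reconcile the `Fintype`/`DecidableRel` instances on `G \ blueGraph G T ⊔ F`
  obtain ⟨n, G', hG'm, hG'Δ, hG'3⟩ := exists_fin_card_edgeFinset_eq_of_le
    (G \ blueGraph G T ⊔ F) (r := r) (m := m) (by omega)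
    (by convert maxDegree_sdiff_blueGraph_sup_le hΔ hTS hF) (by convert hHm)
  exact ⟨n, G', hG'm, hG'Δ, Nat.lt_of_lt_of_le hlt (by convert hG'3)⟩

/-- If `G` is a connected graph with `m ≥ C(r+1,2) + 1` edges and maximum degree at most `r`,
and `G` has a cluster `T` whose common neighborhood `S_T` has size `s ≤ (r + 2)/2`
(i.e. `2s ≤ r + 2`), then `k₃(G) < f₃(m, r)`: some graph `G'` with `m` edges and maximum
degree at most `r` has strictly more triangles. -/
theorem small_cluster_not_extremal {V : Type} [Fintype V] [DecidableEq V]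
    (G : SimpleGraph V) (r m : ℕ) (hr : 1 ≤ r) (hm : (r + 1).choose 2 + 1 ≤ m)
    (hconn : G.Connected)
    (hGm : G.edgeFinset.card = m) (hΔ : G.maxDegree ≤ r)
    (T : Finset V) (hT : IsCluster G r T)
    (hTS : T.card + (commonNbrs G T).card = r + 1)
    (hs : 2 * (commonNbrs G T).card ≤ r + 2) :
    ∃ (n : ℕ) (G' : SimpleGraph (Fin n)),
      G'.edgeFinset.card = m ∧ G'.maxDegree ≤ r ∧
        (G.cliqueFinset 3).card < (G'.cliqueFinset 3).card :=
  small_cluster_not_extremal_general G r m hm hconn hGm hΔ T hT hTS hs
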